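/- Let X be a variety over F_q of characteristic p and n < 0 an integer. Then the p-adic absolute value of the zeta value satisfies |ζ(X, n)|_p = 1. -/

import Mathlib

/-!
With `a_d` the number of closed points of degree `d`, the equation `t Z' = (∑ N_k t^k) Z` with
`N_k = ∑_{d ∣ k} d a_d` is also solved by the Euler product `∏_d (1 - t^d)^(-a_d)`; comparing
coefficients degree by degree shows that `Z` is this product, so its coefficients are natural
numbers. The point `c = q^(-n)` is divisible by `p`, so the truncations `S_K` of `Z` satisfy
`|S_K(c)|_p = 1` and `|P(c) - Q(c) S_K(c)|_p → 0`; the ultrametric inequality then forces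
`|P(c)|_p = |Q(c)|_p`.
-/

open PowerSeries

section LogDerivative

variable {R : Type*} [CommRing R] {A B M M' W W' : R⟦X⟧}

theorem X_mul_derivative_mul (hA : X * d⁄dX R A = M * A) (hB : X * d⁄dX R B = M' * B) :
    X * d⁄dX R (A * B) = (M + M') * (A * B) := by
  rw [Derivation.leibniz, smul_eq_mul, smul_eq_mul]
  linear_combination A * hB + B * hA

theorem X_mul_derivative_pow (hA : X * d⁄dX R A = M * A) (a : ℕ) :
    X * d⁄dX R (A ^ a) = (a • M) * A ^ a := by
  induction a with
  | zero => simp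
  | succ a ih => rw [pow_succ, X_mul_derivative_mul ih hA, succ_nsmul]

theorem X_mul_derivative_prod {ι : Type*} (s : Finset ι) {A M : ι → R⟦X⟧}
    (h : ∀ i ∈ s, X * d⁄dX R (A i) = M i * A i) :
    X * d⁄dX R (∏ i ∈ s, A i) = (∑ i ∈ s, M i) * ∏ i ∈ s, A i := by
  classical
  induction s using Finset.induction_on with
  | empty => simp
  | insert i s hi ih =>
    rw [Finset.prod_insert hi, Finset.sum_insert hi]
    exact X_mul_derivative_mul (h i (Finset.mem_insert_self i s))
      (ih fun j hj => h j (Finset.mem_insert_of_mem hj))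

theorem coeff_eq_of_X_mul_derivative_eq [IsDomain R] [CharZero R] (K : ℕ)
    (hM : constantCoeff M = 0) (hM' : constantCoeff M' = 0)
    (hMM' : ∀ j ≤ K, coeff j M = coeff j M') (hWW' : constantCoeff W = constantCoeff W')
    (hW : X * d⁄dX R W = M * W) (hW' : X * d⁄dX R W' = M' * W') :
    ∀ k ≤ K, coeff k W = coeff k W' := by
  intro k
  induction k using Nat.strong_induction_on with
  | _ k ih =>
    intro hk
    rcases k with _ | k
    · simpa using hWW'
    have hcoeff := congrArg (coeff (k + 1)) hW
    have hcoeff' := congrArg (coeff (k + 1)) hW'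
    rw [coeff_succ_X_mul, coeff_derivative, coeff_mul] at hcoeff hcoeff'
    refine mul_right_cancel₀ (Nat.cast_add_one_ne_zero k) ?_
    rw [hcoeff, hcoeff']
    refine Finset.sum_congr rfl fun ⟨i, j⟩ hij => ?_
    rw [Finset.HasAntidiagonal.mem_antidiagonal] at hij
    rcases i with _ | i
    · simp [hM, hM']
    · rw [hMM' _ (by omega), ih j (by omega) (by omega)]

end LogDerivative

section EulerFactor

def invOneSubXPow (R : Type*) [Semiring R] (d : ℕ) : R⟦X⟧ :=
  mk fun n => if d ∣ n then 1 else 0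

theorem map_invOneSubXPow {R S : Type*} [Semiring R] [Semiring S] (f : R →+* S) (d : ℕ) :
    map f (invOneSubXPow R d) = invOneSubXPow S d := by
  ext n
  simp [invOneSubXPow, apply_ite f]

variable {R : Type*} [CommRing R] {d : ℕ}

theorem constantCoeff_invOneSubXPow : constantCoeff (invOneSubXPow R d) = 1 := by
  simp [invOneSubXPow]

theorem coeff_X_pow_mul_invOneSubXPow (hd : 0 < d) (k : ℕ) :
    coeff k (X ^ d * invOneSubXPow R d) = if d ∈ k.divisors then 1 else 0 := by
  rw [coeff_X_pow_mul', invOneSubXPow, coeff_mk]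
  by_cases hdk : d ≤ k
  · simp [hdk, Nat.dvd_sub_iff_left hdk dvd_rfl, show k ≠ 0 by omega]
  · have : d ∉ k.divisors := fun h => hdk (Nat.divisor_le h)
    simp [hdk, this]

theorem one_sub_X_pow_mul_invOneSubXPow (hd : 0 < d) :
    (1 - X ^ d) * invOneSubXPow R d = 1 := by
  ext k
  rw [sub_mul, one_mul, map_sub, coeff_X_pow_mul_invOneSubXPow hd, invOneSubXPow, coeff_mk,
    coeff_one]
  by_cases hk : k = 0 <;> simp [hk]

theorem X_mul_derivative_invOneSubXPow (hd : 0 < d) :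
    X * d⁄dX R (invOneSubXPow R d) = (d • (X ^ d * invOneSubXPow R d)) * invOneSubXPow R d := by
  obtain ⟨e, rfl⟩ : ∃ e, d = e + 1 := ⟨d - 1, by omega⟩
  have h := one_sub_X_pow_mul_invOneSubXPow (R := R) hd
  have h' := congrArg (d⁄dX R) h
  rw [Derivation.leibniz, map_sub, derivative_one, derivative_pow, derivative_X] at h'
  simp only [smul_eq_mul, add_tsub_cancel_right] at h'
  push_cast at h'
  linear_combination
    (X * invOneSubXPow R (e + 1)) * h' - (X * d⁄dX R (invOneSubXPow R (e + 1))) * h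

end EulerFactor

theorem exists_coeff_eq_natCast_of_X_mul_derivative_eq {R : Type*} [CommRing R] [IsDomain R]
    [CharZero R] (a N : ℕ → ℕ) (hN : ∀ k, N k = ∑ d ∈ k.divisors, d * a d)
    {Z : R⟦X⟧} (hZ0 : coeff 0 Z = 1) (hZ : X * d⁄dX R Z = mk (fun k => (N k : R)) * Z)
    (K : ℕ) :
    ∃ m : ℕ, coeff K Z = m := by
  set s := Finset.Icc 1 K
  set M := ∑ d ∈ s, a d • (d • (X ^ d * invOneSubXPow R d))
  have hW : X * d⁄dX R (∏ d ∈ s, invOneSubXPow R d ^ a d)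
      = M * ∏ d ∈ s, invOneSubXPow R d ^ a d :=
    X_mul_derivative_prod s fun d hd => X_mul_derivative_pow
      (X_mul_derivative_invOneSubXPow (Finset.mem_Icc.mp hd).1) _
  have hM : ∀ j ≤ K, coeff j M = N j := by
    intro j hj
    have hsub : j.divisors ⊆ s := fun d hd =>
      Finset.mem_Icc.mpr ⟨Nat.pos_of_mem_divisors hd, (Nat.divisor_le hd).trans hj⟩
    calc coeff j M = ∑ d ∈ s, if d ∈ j.divisors then ((d * a d : ℕ) : R) else 0 := by
          refine (map_sum _ _ _).trans (Finset.sum_congr rfl fun d hd => ?_)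
          rw [map_nsmul, map_nsmul, coeff_X_pow_mul_invOneSubXPow (Finset.mem_Icc.mp hd).1]
          split_ifs <;> simp [mul_comm]
      _ = N j := by
          rw [Finset.sum_ite_mem, Finset.inter_eq_right.mpr hsub, hN, Nat.cast_sum]
  have hM0 : constantCoeff M = 0 := by
    rw [← coeff_zero_eq_constantCoeff_apply, hM 0 K.zero_le, hN]
    simp
  have hZW := coeff_eq_of_X_mul_derivative_eq K (by simp [hN]) hM0
    (fun j hj => by rw [coeff_mk, hM j hj])
    (by simpa [map_prod, constantCoeff_invOneSubXPow] using hZ0) hZ hW K le_rfl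
  refine ⟨coeff K (∏ d ∈ s, invOneSubXPow ℕ d ^ a d), ?_⟩
  have hmap : ∏ d ∈ s, invOneSubXPow R d ^ a d
      = map (Nat.castRingHom R) (∏ d ∈ s, invOneSubXPow ℕ d ^ a d) := by
    simp only [map_prod, map_pow, map_invOneSubXPow]
  rw [hZW, hmap, coeff_map, eq_natCast]

section PadicEvaluation

open Polynomial

variable {p : ℕ}

theorem exists_padicNorm_coeff_le (f : ℚ[X]) :
    ∃ C, 0 < C ∧ ∀ i, padicNorm p (f.coeff i) ≤ C := by
  have hsum : 0 ≤ ∑ i ∈ f.support, padicNorm p (f.coeff i) :=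
    Finset.sum_nonneg fun i _ => padicNorm.nonneg _
  refine ⟨1 + ∑ i ∈ f.support, padicNorm p (f.coeff i), by linarith, fun i => ?_⟩
  by_cases hi : i ∈ f.support
  · have := Finset.single_le_sum (f := fun i => padicNorm p (f.coeff i))
      (fun i _ => padicNorm.nonneg _) hi
    linarith
  · rw [notMem_support_iff.mp hi, padicNorm.zero]
    linarith

variable [Fact p.Prime]

theorem padicNorm_eq_of_padicNorm_sub_lt_max {x y : ℚ}
    (h : padicNorm p (x - y) < max (padicNorm p x) (padicNorm p y)) :
    padicNorm p x = padicNorm p y := by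
  by_contra hne
  rw [sub_eq_add_neg, padicNorm.add_eq_max_of_ne (by rwa [padicNorm.neg]), padicNorm.neg] at h
  exact lt_irrefl _ h

theorem padicValRat_div_eq_zero_of_padicNorm_eq {x y : ℚ} (h : padicNorm p x = padicNorm p y) :
    padicValRat p (x / y) = 0 := by
  rcases eq_or_ne y 0 with rfl | hy
  · simp
  have hx : x ≠ 0 := fun hx => padicNorm.nonzero hy (by rw [← h, hx, padicNorm.zero])
  have hnorm := padicNorm.eq_zpow_of_nonzero (p := p) (div_ne_zero hx hy)
  rw [padicNorm.div, h, div_self (padicNorm.nonzero hy)] at hnorm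
  have hp : (1 : ℚ) < p := mod_cast (Fact.out : p.Prime).one_lt
  simpa using (zpow_eq_one_iff_right₀ (by positivity) hp.ne').mp hnorm.symm

theorem padicNorm_coeff_mul_le {f g : ℚ[X]} {C : ℚ} (hf : ∀ i, padicNorm p (f.coeff i) ≤ C)
    (hg : ∀ j, padicNorm p (g.coeff j) ≤ 1) (k : ℕ) :
    padicNorm p ((f * g).coeff k) ≤ C := by
  rw [Polynomial.coeff_mul]
  have hC : 0 ≤ C := (padicNorm.nonneg _).trans (hf 0)
  refine padicNorm.sum_le' (fun ij _ => ?_) hC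
  rw [padicNorm.mul]
  simpa using mul_le_mul (hf ij.1) (hg ij.2) (padicNorm.nonneg _) hC

theorem padicNorm_eval_le_of_coeff_eq_zero {f : ℚ[X]} {C c : ℚ}
    (hf : ∀ i, padicNorm p (f.coeff i) ≤ C) {K : ℕ} (hK : ∀ i < K, f.coeff i = 0)
    (hc : padicNorm p c ≤ 1) : padicNorm p (f.eval c) ≤ C * padicNorm p c ^ K := by
  have hC : 0 ≤ C := (padicNorm.nonneg _).trans (hf 0)
  have hpow : ∀ i, 0 ≤ padicNorm p c ^ i := fun i => pow_nonneg (padicNorm.nonneg c) i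
  rw [eval_eq_sum_range]
  refine padicNorm.sum_le' (fun i _ => ?_) (mul_nonneg hC (hpow K))
  by_cases hi : i < K
  · rw [hK i hi, zero_mul, padicNorm.zero]
    exact mul_nonneg hC (hpow K)
  · rw [padicNorm.mul, IsAbsoluteValue.abv_pow (padicNorm p)]
    exact mul_le_mul (hf i) (pow_le_pow_of_le_one (padicNorm.nonneg c) hc (by omega))
      (hpow i) hC

theorem padicNorm_eval_eq_one {f : ℚ[X]} {c : ℚ} (h0 : f.coeff 0 = 1)
    (hf : ∀ i, padicNorm p (f.coeff i) ≤ 1) (hc : padicNorm p c < 1) :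
    padicNorm p (f.eval c) = 1 := by
  have hf1 : ∀ i, padicNorm p ((f - 1).coeff i) ≤ 1 := by
    intro i
    rcases eq_or_ne i 0 with rfl | hi
    · simp [h0]
    · simpa [Polynomial.coeff_one, hi] using hf i
  have hsub := padicNorm_eval_le_of_coeff_eq_zero hf1 (K := 1)
    (fun i hi => by simp [Nat.lt_one_iff.mp hi, h0]) hc.le
  rw [eval_sub, eval_one, one_mul, pow_one] at hsub
  have hlt : padicNorm p (f.eval c - 1) < max (padicNorm p (f.eval c)) (padicNorm p 1) :=
    lt_max_of_lt_right (by rw [padicNorm.one]; exact hsub.trans_lt hc)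
  rw [padicNorm_eq_of_padicNorm_sub_lt_max hlt, padicNorm.one]

theorem coeff_mul_trunc_sub_eq_zero {R : Type*} [CommRing R] {P Q : R[X]} {Z : R⟦X⟧}
    (hPQ : (P : R⟦X⟧) = Q * Z) {K : ℕ} (hK : P.natDegree < K) {i : ℕ} (hi : i < K) :
    (Q * trunc K Z - P).coeff i = 0 := by
  rw [coeff_sub, sub_eq_zero, ← Polynomial.coeff_coe, ← coeff_coe_trunc_of_lt hi,
    Polynomial.coe_mul, trunc_mul_trunc, ← hPQ, trunc_coe_eq_self hK, Polynomial.coeff_coe]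

theorem padicNorm_eval_eq_of_coe_eq_mul {Z : ℚ⟦X⟧} (hZ0 : PowerSeries.coeff 0 Z = 1)
    (hZ : ∀ k, padicNorm p (PowerSeries.coeff k Z) ≤ 1) {P Q : ℚ[X]}
    (hPQ : (P : ℚ⟦X⟧) = Q * Z) {c : ℚ} (hc : padicNorm p c < 1) :
    padicNorm p (P.eval c) = padicNorm p (Q.eval c) := by
  obtain ⟨C, hC0, hC⟩ := exists_padicNorm_coeff_le (p := p) Q
  have htrunc : ∀ K j, padicNorm p ((trunc K Z).coeff j) ≤ 1 := by
    intro K j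
    rw [coeff_trunc]
    split_ifs
    exacts [hZ j, by simp]
  have happrox : ∀ K, P.natDegree < K →
      padicNorm p (P.eval c - Q.eval c * (trunc K Z).eval c) ≤ C * padicNorm p c ^ K := by
    intro K hK
    have hT : ∀ i, padicNorm p ((Q * trunc K Z - P).coeff i) ≤ C := by
      intro i
      by_cases hi : i < K
      · rw [coeff_mul_trunc_sub_eq_zero hPQ hK hi, padicNorm.zero]
        exact hC0.le
      · rw [coeff_sub, coeff_eq_zero_of_natDegree_lt (p := P) (by omega), sub_zero]
        exact padicNorm_coeff_mul_le hC (htrunc K) i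
    rw [← padicNorm.neg, neg_sub, ← eval_mul, ← eval_sub]
    exact padicNorm_eval_le_of_coeff_eq_zero hT
      (fun i hi => coeff_mul_trunc_sub_eq_zero hPQ hK hi) hc.le
  by_contra hne
  set δ := max (padicNorm p (P.eval c)) (padicNorm p (Q.eval c))
  have hδ : 0 < δ := by
    rcases lt_or_gt_of_ne hne with h | h
    · exact lt_max_of_lt_right ((padicNorm.nonneg _).trans_lt h)
    · exact lt_max_of_lt_left ((padicNorm.nonneg _).trans_lt h)
  have hlim : Filter.Tendsto (fun K : ℕ => C * padicNorm p c ^ K) Filter.atTop (nhds 0) := by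
    simpa using (tendsto_pow_atTop_nhds_zero_of_lt_one (padicNorm.nonneg c) hc).const_mul C
  obtain ⟨K, hK, hKδ⟩ := ((Filter.eventually_gt_atTop P.natDegree).and
    (hlim.eventually (gt_mem_nhds hδ))).exists
  have hS : padicNorm p ((trunc K Z).eval c) = 1 :=
    padicNorm_eval_eq_one (by rw [coeff_trunc, if_pos (by omega), hZ0]) (htrunc K) hc
  refine hne ?_
  have := padicNorm_eq_of_padicNorm_sub_lt_max (p := p) (x := P.eval c)
    (y := Q.eval c * (trunc K Z).eval c)
    (by rw [padicNorm.mul, hS, mul_one]; exact (happrox K hK).trans_lt hKδ)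
  rwa [padicNorm.mul, hS, mul_one] at this

end PadicEvaluation

open AlgebraicGeometry

theorem zeta_value_at_negative_integer_is_p_adic_unit_general
    (p : ℕ) (hp : p.Prime) (e : ℕ) (he : 1 ≤ e) (q : ℕ) (hq : q = p ^ e)
    (X : Scheme)
    (N : ℕ → ℕ)
    (hN : ∀ k, N k = ∑ d ∈ k.divisors,
      d * Nat.card {x : X // IsClosed ({x} : Set X) ∧ Nat.card (X.residueField x) = q ^ d})
    (Z : PowerSeries ℚ) (hZ0 : PowerSeries.coeff 0 Z = 1)
    (hZ : PowerSeries.X * PowerSeries.derivative ℚ Z =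
      PowerSeries.mk (fun k => (N k : ℚ)) * Z)
    (n : ℤ) (hn : n < 0) :
    ∀ P Q : Polynomial ℚ, IsCoprime P Q → Q.coeff 0 = 1 →
      (P : PowerSeries ℚ) = (Q : PowerSeries ℚ) * Z →
      padicValRat p
        (Polynomial.eval ((q : ℚ) ^ (-n)) P / Polynomial.eval ((q : ℚ) ^ (-n)) Q) = 0 := by
  intro P Q _ _ hPQ
  have : Fact p.Prime := ⟨hp⟩
  have hZint : ∀ k, padicNorm p (coeff k Z) ≤ 1 := fun k => by
    obtain ⟨m, hm⟩ := exists_coeff_eq_natCast_of_X_mul_derivative_eq _ N hN hZ0 hZ k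
    rw [hm]
    exact padicNorm.of_nat m
  obtain ⟨m, hm⟩ : ∃ m : ℕ, -n = ((m + 1 : ℕ) : ℤ) := ⟨(-n - 1).toNat, by omega⟩
  have hc : padicNorm p ((q : ℚ) ^ (-n)) < 1 := by
    rw [hm, zpow_natCast, hq]
    exact_mod_cast (padicNorm.nat_lt_one_iff _).mpr
      (dvd_pow (dvd_pow_self p (by omega)) (Nat.succ_ne_zero m))
  exact padicValRat_div_eq_zero_of_padicNorm_eq
    (padicNorm_eval_eq_of_coe_eq_mul hZ0 hZint hPQ hc)

theorem zeta_value_at_negative_integer_is_p_adic_unit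
    (p : ℕ) (hp : p.Prime) (e : ℕ) (he : 1 ≤ e) (q : ℕ) (hq : q = p ^ e)
    (F : Type) [Field F] [Fintype F] (hF : Fintype.card F = q)
    (X : Scheme) (f : X ⟶ Spec (CommRingCat.of F))
    [IsSeparated f] [LocallyOfFiniteType f] [QuasiCompact f]
    (N : ℕ → ℕ)
    (hN : ∀ k, N k = ∑ d ∈ k.divisors,
      d * Nat.card {x : X // IsClosed ({x} : Set X) ∧ Nat.card (X.residueField x) = q ^ d})
    (Z : PowerSeries ℚ) (hZ0 : PowerSeries.coeff 0 Z = 1)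
    (hZ : PowerSeries.X * PowerSeries.derivative ℚ Z =
      PowerSeries.mk (fun k => (N k : ℚ)) * Z)
    (n : ℤ) (hn : n < 0) :
    ∀ P Q : Polynomial ℚ, IsCoprime P Q → Q.coeff 0 = 1 →
      (P : PowerSeries ℚ) = (Q : PowerSeries ℚ) * Z →
      padicValRat p
        (Polynomial.eval ((q : ℚ) ^ (-n)) P / Polynomial.eval ((q : ℚ) ^ (-n)) Q) = 0 :=
  zeta_value_at_negative_integer_is_p_adic_unit_general p hp e he q hq X N hN Z hZ0 hZ n hn
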